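/- With φ continuous prefix-monotone and ψ(γ) = Σ_{w∈A*} (1/(|A|+1))^{|w|} φ(wγ) as above: for all α, β ∈ A^ω, φ(α) > φ(β) implies ψ(α) > ψ(β); and ψ(α) > ψ(β) holds if and only if there exists w ∈ A* with φ(wα) > φ(wβ). -/

import Mathlib

open Filter Topology

/-- Concatenation of a finite word with an infinite word. -/
def wcat {A : Type*} (u : List A) (β : ℕ → A) : ℕ → A :=
  fun n => if h : n < u.length then u.get ⟨n, h⟩ else β (n - u.length)

/-- A payoff is prefix-monotone if there are no finite words `u, v` and infinite words
`β, γ` with `φ(uβ) > φ(uγ)` and `φ(vβ) < φ(vγ)`. -/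
def PrefixMonotone {A : Type*} (φ : (ℕ → A) → ℝ) : Prop :=
  ¬ ∃ (u v : List A) (β γ : ℕ → A),
      φ (wcat u β) > φ (wcat u γ) ∧ φ (wcat v β) < φ (wcat v γ)

/-!
Prefix-monotonicity says that once some prefix `u` gives `φ(uβ) < φ(uα)`, every prefix `v`
gives `φ(vβ) ≤ φ(vα)`. Hence the terms of the series `ψ(α) - ψ(β)` are all nonnegative and
one of them is positive; if no prefix separates `α` from `β`, all terms are nonpositive.
The series converges because `φ` is bounded on the compact space `A^ω` and there are only
`|A|^n` words of length `n`, against weights `(|A|+1)^{-n}`.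
-/

@[simp]
lemma wcat_nil {A : Type*} (β : ℕ → A) : wcat [] β = β := by
  funext n; simp [wcat]

lemma summable_pow_length {A : Type*} [Fintype A] {r : ℝ} (hr0 : 0 ≤ r)
    (hr : Fintype.card A * r < 1) : Summable fun w : List A => r ^ w.length := by
  rw [← List.equivSigmaTuple.symm.summable_iff]
  refine (summable_sigma_of_nonneg fun _ => pow_nonneg hr0 _).2
    ⟨fun _ => .of_finite, ?_⟩
  refine (summable_geometric_of_lt_one (by positivity) hr).congr fun n => ?_
  simp [List.equivSigmaTuple, mul_pow]

lemma summable_pow_length_mul {A : Type*} [Fintype A] {r : ℝ} (hr0 : 0 ≤ r)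
    (hr : Fintype.card A * r < 1) {f : List A → ℝ} {M : ℝ} (hf : ∀ w, ‖f w‖ ≤ M) :
    Summable fun w : List A => r ^ w.length * f w := by
  refine ((summable_pow_length hr0 hr).mul_right M).of_norm_bounded fun w => ?_
  rw [norm_mul, norm_pow, Real.norm_of_nonneg hr0]
  gcongr
  exact hf w

lemma PrefixMonotone.le_of_lt {A : Type*} {φ : (ℕ → A) → ℝ} (hφ : PrefixMonotone φ)
    {u : List A} {α β : ℕ → A} (h : φ (wcat u β) < φ (wcat u α)) (v : List A) :
    φ (wcat v β) ≤ φ (wcat v α) :=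
  not_lt.1 fun h' => hφ ⟨u, v, α, β, h, h'⟩

lemma PrefixMonotone.tsum_lt_tsum_iff {A : Type*} {φ : (ℕ → A) → ℝ} (hφ : PrefixMonotone φ)
    {g : List A → ℝ} (hg : ∀ w, 0 < g w) {α β : ℕ → A}
    (hα : Summable fun w => g w * φ (wcat w α)) (hβ : Summable fun w => g w * φ (wcat w β)) :
    ∑' w, g w * φ (wcat w β) < ∑' w, g w * φ (wcat w α) ↔
      ∃ w, φ (wcat w β) < φ (wcat w α) := by
  constructor
  · contrapose!
    intro hle
    exact hα.tsum_le_tsum (fun w => mul_le_mul_of_nonneg_left (hle w) (hg w).le) hβ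
  · rintro ⟨u, hu⟩
    exact hβ.tsum_lt_tsum (fun w => mul_le_mul_of_nonneg_left (hφ.le_of_lt hu w) (hg w).le)
      (mul_lt_mul_of_pos_left hu (hg u)) hα

theorem psi_order_characterization_general
    {A : Type*} [Fintype A] [TopologicalSpace A]
    (φ : (ℕ → A) → ℝ) (hcont : Continuous φ) (hpm : PrefixMonotone φ)
    (ψ : (ℕ → A) → ℝ)
    (hψ : ∀ γ : ℕ → A,
      ψ γ = ∑' w : List A,
        (1 / ((Fintype.card A : ℝ) + 1)) ^ w.length * φ (wcat w γ)) :
    (∀ α β : ℕ → A, φ α > φ β → ψ α > ψ β) ∧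
    (∀ α β : ℕ → A, ψ α > ψ β ↔ ∃ w : List A, φ (wcat w α) > φ (wcat w β)) := by
  set r : ℝ := 1 / ((Fintype.card A : ℝ) + 1)
  have hr0 : 0 < r := by positivity
  have hr : Fintype.card A * r < 1 := by
    rw [mul_one_div, div_lt_one (by positivity)]
    linarith
  obtain ⟨M, hM⟩ := isCompact_univ.exists_bound_of_continuousOn hcont.continuousOn
  have hsum (γ : ℕ → A) : Summable fun w : List A => r ^ w.length * φ (wcat w γ) :=
    summable_pow_length_mul hr0.le hr fun w => hM _ (Set.mem_univ _)
  have hiff (α β : ℕ → A) : ψ α > ψ β ↔ ∃ w : List A, φ (wcat w α) > φ (wcat w β) := by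
    rw [hψ, hψ]
    exact hpm.tsum_lt_tsum_iff (fun w => pow_pos hr0 _) (hsum α) (hsum β)
  refine ⟨fun α β h => (hiff α β).2 ⟨[], ?_⟩, hiff⟩
  simpa using h

theorem psi_order_characterization
    {A : Type*} [Fintype A] [Nonempty A] [TopologicalSpace A] [DiscreteTopology A]
    (φ : (ℕ → A) → ℝ) (hcont : Continuous φ) (hpm : PrefixMonotone φ)
    (ψ : (ℕ → A) → ℝ)
    (hψ : ∀ γ : ℕ → A,
      ψ γ = ∑' w : List A,
        (1 / ((Fintype.card A : ℝ) + 1)) ^ w.length * φ (wcat w γ)) :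
    (∀ α β : ℕ → A, φ α > φ β → ψ α > ψ β) ∧
    (∀ α β : ℕ → A, ψ α > ψ β ↔ ∃ w : List A, φ (wcat w α) > φ (wcat w β)) :=
  psi_order_characterization_general φ hcont hpm ψ hψ
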